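/- Let X be a topological space and A ⊆ X a locally closed subset (i.e., A = U ∩ C with U open and C closed in X; equivalently, A is open in its closure). Then the subspace inclusion A → X is an exponentiable morphism in Top: the functor − ×_X A : Top/X → Top/X has a right adjoint. -/

import Mathlib

/-!
Pulling back along the inclusion `A ↪ X` is, up to isomorphism, restriction `Y ↦ p⁻¹ A` of spaces
`p : Y → X`, since restriction is also right adjoint to `Over.map`. So it suffices to give
restriction a right adjoint. For `Z` over `A` take the space of partial sections
`Z ⊔ (X \ A)` over `X`: over a point of `A` a point of the fibre of `Z`, over a point outside `A`
the empty section. Its topology is the coarsest one making the projection continuous and making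
open, for each open `W ⊆ Z`, the set of partial sections with values in `W`, namely the points of
`W` together with the empty sections over the exterior of `A`. A map `p⁻¹ A → Z` over `A`
extends by empty sections to a map `Y → Z ⊔ (X \ A)` over `X`; the preimage of such a set is
`t ∩ p⁻¹ A ∪ p⁻¹ (closure A)ᶜ` for an open `t ⊆ Y`, which is open because `A` is open in its
closure.
-/

open CategoryTheory Set Topology

lemma IsLocallyClosed.isOpen_inter_preimage_union_preimage_compl_closure
    {X Y : Type*} [TopologicalSpace X] [TopologicalSpace Y] {A : Set X} (hA : IsLocallyClosed A)
    {f : Y → X} (hf : Continuous f) {t : Set Y} (ht : IsOpen t) :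
    IsOpen (t ∩ f ⁻¹' A ∪ f ⁻¹' (closure A)ᶜ) := by
  have : t ∩ f ⁻¹' A ∪ f ⁻¹' (closure A)ᶜ = (t ∪ f ⁻¹' (closure A)ᶜ) ∩ f ⁻¹' coborder A := by
    rw [coborder_eq_union_closure_compl, preimage_union, inter_union_distrib_right]
  rw [this]
  exact (ht.union (isClosed_closure.isOpen_compl.preimage hf)).inter
    (hA.isOpen_coborder.preimage hf)

lemma CategoryTheory.Over.w_apply {C : Type*} [Category C] {FC : C → C → Type*} {CC : C → Type*}
    [∀ X Y, FunLike (FC X Y) (CC X) (CC Y)] [ConcreteCategory C FC] {X : C} {Y Z : Over X}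
    (f : Y ⟶ Z) (y : ToType Y.left) : Z.hom (f.left y) = Y.hom y := by
  rw [← ConcreteCategory.comp_apply, Over.w]

namespace TopCat

universe u

variable {X : TopCat.{u}} (A : Set X)

def subspaceIncl : TopCat.of A ⟶ X := ofHom ⟨Subtype.val, continuous_subtype_val⟩

noncomputable def restrictPreimage : Over X ⥤ Over (TopCat.of A) where
  obj Y := Over.mk (ofHom (Y.hom.hom.restrictPreimage A))
  map f := Over.homMk
    (ofHom ⟨fun y => ⟨f.left y, by rw [mem_preimage, Over.w_apply]; exact y.2⟩, by fun_prop⟩)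
    (by ext y; exact Over.w_apply f y.1)

-- Typed as a point of `((restrictPreimage A).obj Y).left`, so that `rw` can rewrite around it.
variable {A} in
def restrictPreimage.mk {Y : Over X} (y : Y.left) (hy : Y.hom y ∈ A) :
    ((restrictPreimage A).obj Y).left :=
  ⟨y, hy⟩

noncomputable def mapRestrictPreimageAdj : Over.map (subspaceIncl A) ⊣ restrictPreimage A :=
  Adjunction.mkOfHomEquiv
    { homEquiv W Y :=
        { toFun u := Over.homMk
            (ofHom ⟨fun w => ⟨u.left w, by simp [subspaceIncl, Over.w_apply]⟩, by fun_prop⟩)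
            (by ext w; exact Over.w_apply u w)
          invFun v := Over.homMk (v.left ≫ subspaceIncl _)
            (by ext w; exact congrArg Subtype.val (Over.w_apply v w))
          left_inv u := by ext; rfl
          right_inv v := by ext; rfl }
      homEquiv_naturality_left_symm := by intros; ext; rfl
      homEquiv_naturality_right := by intros; ext; rfl }

def PartialProduct (Z : Over (TopCat.of A)) : Type u := Z.left ⊕ {x : X // x ∉ A}

namespace PartialProduct

variable {A} {Z : Over (TopCat.of A)}

-- Typed into `PartialProduct A Z` rather than the sum type, which carries another topology.
def inl : Z.left → PartialProduct A Z := Sum.inl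

def inr (x : X) (hx : x ∉ A) : PartialProduct A Z := Sum.inr ⟨x, hx⟩

def proj : PartialProduct A Z → X := Sum.elim (fun z => (Z.hom z : X)) Subtype.val

def sectionOpen (W : Set Z.left) : Set (PartialProduct A Z) :=
  {p | Sum.elim (· ∈ W) (fun x => x.1 ∉ closure A) p}

instance : TopologicalSpace (PartialProduct A Z) :=
  .induced proj inferInstance ⊓ .generateFrom (sectionOpen '' {W | IsOpen W})

@[simp]
lemma inl_mem_sectionOpen {W : Set Z.left} {z : Z.left} :
    inl z ∈ sectionOpen (A := A) W ↔ z ∈ W := Iff.rfl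

@[simp]
lemma inr_mem_sectionOpen {W : Set Z.left} {x : X} (hx : x ∉ A) :
    inr x hx ∈ sectionOpen W ↔ x ∉ closure A := Iff.rfl

@[simp]
lemma proj_inl (z : Z.left) : proj (inl z : PartialProduct A Z) = Z.hom z := rfl

lemma eq_inr_of_proj_eq {p : PartialProduct A Z} {x : X} (hx : x ∉ A) (hp : proj p = x) :
    p = inr x hx := by
  subst hp
  rcases p with z | x
  · exact absurd (Z.hom z).2 hx
  · rfl

lemma continuous_proj : Continuous (proj : PartialProduct A Z → X) :=
  continuous_iff_le_induced.mpr inf_le_left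

lemma isOpen_sectionOpen {W : Set Z.left} (hW : IsOpen W) : IsOpen (sectionOpen (A := A) W) :=
  inf_le_right (a := TopologicalSpace.induced proj inferInstance) _
    (TopologicalSpace.isOpen_generateFrom_of_mem ⟨W, hW, rfl⟩)

lemma isInducing_inl : IsInducing (inl : Z.left → PartialProduct A Z) := by
  refine ⟨le_antisymm ?_ fun W hW => ⟨sectionOpen W, isOpen_sectionOpen hW, rfl⟩⟩
  rw [← continuous_iff_le_induced]
  refine continuous_inf_rng.mpr ⟨continuous_induced_rng.mpr ?_, continuous_generateFrom_iff.mpr ?_⟩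
  · exact continuous_subtype_val.comp Z.hom.hom.continuous
  · rintro _ ⟨W, hW, rfl⟩
    exact hW

def fibreValue : (p : PartialProduct A Z) → proj p ∈ A → Z.left
  | Sum.inl z, _ => z
  | Sum.inr x, hx => absurd hx x.2

lemma inl_fibreValue (p : PartialProduct A Z) (hp : proj p ∈ A) : inl (fibreValue p hp) = p := by
  rcases p with z | x
  · rfl
  · exact absurd hp x.2

lemma coe_hom_fibreValue (p : PartialProduct A Z) (hp : proj p ∈ A) :
    (Z.hom (fibreValue p hp) : X) = proj p :=
  congrArg proj (inl_fibreValue p hp)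

variable (Z) in
def toOver : Over X := Over.mk (ofHom ⟨proj (A := A) (Z := Z), continuous_proj⟩)

variable {Y : Over X}

open Classical in
noncomputable def extend (u : (restrictPreimage A).obj Y ⟶ Z) (y : Y.left) : PartialProduct A Z :=
  if hy : Y.hom y ∈ A then inl (u.left (restrictPreimage.mk y hy)) else inr (Y.hom y) hy

lemma proj_extend (u : (restrictPreimage A).obj Y ⟶ Z) (y : Y.left) :
    proj (extend u y) = Y.hom y := by
  by_cases hy : Y.hom y ∈ A
  · rw [extend, dif_pos hy, proj_inl, Over.w_apply]
    rfl
  · rw [extend, dif_neg hy]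
    rfl

lemma continuous_extend (hA : IsLocallyClosed A) (u : (restrictPreimage A).obj Y ⟶ Z) :
    Continuous (extend u) := by
  refine continuous_inf_rng.mpr ⟨continuous_induced_rng.mpr ?_, continuous_generateFrom_iff.mpr ?_⟩
  · simpa only [Function.comp_def, proj_extend] using Y.hom.hom.continuous
  · rintro _ ⟨W, hW, rfl⟩
    obtain ⟨t, ht, htW⟩ := isOpen_induced_iff.mp (u.left.hom.continuous.isOpen_preimage W hW)
    convert hA.isOpen_inter_preimage_union_preimage_compl_closure Y.hom.hom.continuous ht using 1
    ext y
    by_cases hy : Y.hom y ∈ A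
    · have hyt : y ∈ t ↔ u.left (restrictPreimage.mk y hy) ∈ W := Set.ext_iff.mp htW ⟨y, hy⟩
      simp [extend, hy, hyt, subset_closure hy]
    · simp [extend, hy]

noncomputable def curry (hA : IsLocallyClosed A) (u : (restrictPreimage A).obj Y ⟶ Z) :
    Y ⟶ toOver Z :=
  Over.homMk (ofHom ⟨extend u, continuous_extend hA u⟩) (by ext y; exact proj_extend u y)

lemma proj_mem_of_mem_restrictPreimage (h : Y ⟶ toOver Z) (y : ((restrictPreimage A).obj Y).left) :
    proj (h.left y.1) ∈ A := by
  have := y.2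
  rwa [mem_preimage, ← Over.w_apply h] at this

noncomputable def uncurry (h : Y ⟶ toOver Z) : (restrictPreimage A).obj Y ⟶ Z :=
  Over.homMk
    (ofHom ⟨fun y => fibreValue (h.left y.1) (proj_mem_of_mem_restrictPreimage h y), by
      rw [isInducing_inl.continuous_iff]
      have : inl ∘ (fun y : ((restrictPreimage A).obj Y).left =>
          fibreValue (h.left y.1) (proj_mem_of_mem_restrictPreimage h y)) = h.left ∘ Subtype.val :=
        funext fun y => inl_fibreValue _ _
      exact this ▸ h.left.hom.continuous.comp continuous_subtype_val⟩)
    (by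
      ext y
      exact (coe_hom_fibreValue _ _).trans (Over.w_apply h y.1))

noncomputable def homEquiv (hA : IsLocallyClosed A) (Y : Over X) (Z : Over (TopCat.of A)) :
    ((restrictPreimage A).obj Y ⟶ Z) ≃ (Y ⟶ toOver Z) where
  toFun := curry hA
  invFun := uncurry
  left_inv u := by
    ext y
    apply Sum.inl_injective
    exact (inl_fibreValue _ _).trans (dif_pos y.2)
  right_inv h := by
    ext y
    change extend (uncurry h) y = h.left y
    by_cases hy : Y.hom y ∈ A
    · rw [extend, dif_pos hy]
      exact inl_fibreValue _ _
    · rw [extend, dif_neg hy]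
      exact (eq_inr_of_proj_eq hy (Over.w_apply h y)).symm

lemma homEquiv_naturality (hA : IsLocallyClosed A) {Y' Y : Over X} (f : Y' ⟶ Y)
    (u : (restrictPreimage A).obj Y ⟶ Z) :
    homEquiv hA Y' Z ((restrictPreimage A).map f ≫ u) = f ≫ homEquiv hA Y Z u := by
  ext y
  change extend _ y = extend u (f.left y)
  have hfy : Y.hom (f.left y) = Y'.hom y := Over.w_apply f y
  by_cases hy : Y'.hom y ∈ A
  · rw [extend, dif_pos hy, extend, dif_pos (hfy ▸ hy)]
    rfl
  · rw [extend, dif_neg hy, extend, dif_neg (hfy ▸ hy)]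
    simp only [hfy]

end PartialProduct

lemma isLeftAdjoint_restrictPreimage (hA : IsLocallyClosed A) :
    (restrictPreimage A).IsLeftAdjoint :=
  (Adjunction.adjunctionOfEquivRight (PartialProduct.homEquiv hA)
    fun _ _ _ f u => PartialProduct.homEquiv_naturality hA f u).isLeftAdjoint

lemma isLeftAdjoint_pullback_subspaceIncl (hA : IsLocallyClosed A) :
    (Over.pullback (subspaceIncl A)).IsLeftAdjoint :=
  have := isLeftAdjoint_restrictPreimage A hA
  Functor.isLeftAdjoint_of_iso ((mapRestrictPreimageAdj A).rightAdjointUniq (Over.mapPullbackAdj _))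

end TopCat

/-- The inclusion of a locally closed subspace `A → X`
(`A` an intersection of an open and a closed set) is an exponentiable morphism
in `Top`: the functor `− ×_X A : Top/X → Top/X` has a right adjoint. -/
theorem locallyClosed_inclusion_exponentiable
    (X : TopCat) (A : Set X) (hA : IsLocallyClosed A)
    (i : TopCat.of A ⟶ X)
    (hi : ∀ a : A, i a = (a : X)) :
    (Over.pullback i ⋙ Over.map i).IsLeftAdjoint := by
  obtain rfl : i = TopCat.subspaceIncl A := by
    ext a
    exact hi a
  have := TopCat.isLeftAdjoint_pullback_subspaceIncl A hA
  infer_instance
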